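/- arXiv:1508.06754 — 2 statements merged into one kernel-verified Lean document; each statement's English description precedes it below -/
import Mathlib

section
/- For every N ≥ 2, the word 010·∏_{n=2}^{N}(f̂_{n-1}·f̂_n·f̂_{n-1}) is a prefix of the Fibonacci infinite word f. In other words, f = 010·∏_{n≥2} f̂_{n-1} f̂_n f̂_{n-1}. -/
/-- The finite Fibonacci words over the alphabet {0,1}: f 1 = 1, f 2 = 0,
and f n = f (n-1) ++ f (n-2) for n ≥ 3. -/
def fibWord : ℕ → List ℕ
  | 0 => []
  | 1 => [1]
  | 2 => [0]
  | n + 3 => fibWord (n + 2) ++ fibWord (n + 1)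

/-- A finite word is a prefix of the Fibonacci infinite word iff it is a
prefix of some finite Fibonacci word f m with m ≥ 2. -/
def IsFibPrefix (x : List ℕ) : Prop := ∃ m, 2 ≤ m ∧ x <+: fibWord m

/-- The left rotation of a word w₁⋯w_k is w_k w₁⋯w_{k-1}. -/
def leftRot (w : List ℕ) : List ℕ :=
  match w.getLast? with
  | none => []
  | some a => a :: w.dropLast

/-- The singular word f̂ n: the left rotation of f n with its first letter
complemented (0 and 1 exchanged). -/
def singWord (n : ℕ) : List ℕ :=
  match leftRot (fibWord n) with
  | [] => []
  | a :: t => (1 - a) :: t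

lemma fib_ne_nil : ∀ n, fibWord (n+1) ≠ []
  | 0 => by simp [fibWord]
  | 1 => by simp [fibWord]
  | n+2 => by
      show fibWord (n+2) ++ fibWord (n+1) ≠ []
      simp [fib_ne_nil n]

lemma fib_last : ∀ n, (fibWord (n+1)).getLast? = some ((n+1) % 2)
  | 0 => rfl
  | 1 => rfl
  | n+2 => by
      show (fibWord (n+2) ++ fibWord (n+1)).getLast? = some ((n+3) % 2)
      rw [List.getLast?_append_of_ne_nil _ (fib_ne_nil n), fib_last n]
      congr 1
      omega

lemma fib_concat (n : ℕ) :
    (fibWord (n+1)).dropLast ++ [(n+1) % 2] = fibWord (n+1) := by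
  have h2 := fib_ne_nil n
  conv_rhs => rw [← List.dropLast_append_getLast h2]
  have := fib_last n
  rw [List.getLast?_eq_getLast h2] at this
  rw [Option.some_inj.mp this]

lemma sing_cons (n : ℕ) :
    singWord (n+1) = (n % 2) :: (fibWord (n+1)).dropLast := by
  unfold singWord leftRot
  rw [fib_last n]
  have : 1 - (n+1) % 2 = n % 2 := by omega
  simp [this]

lemma key : ∀ N, 2 ≤ N →
    ([0, 1, 0] ++
      ((List.range (N - 1)).map
        (fun i => singWord (i + 1) ++ singWord (i + 2) ++ singWord (i + 1))).flatten)
      ++ [(N+1) % 2] = fibWord (N+3) ++ fibWord (N+1) := by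
  intro N hN
  induction N, hN using Nat.le_induction with
  | base => decide
  | succ n hn ih =>
    obtain ⟨m, rfl⟩ : ∃ m, n = m + 2 := ⟨n - 2, by omega⟩
    have h1 : m + 3 - 1 = m + 2 := by omega
    have h2 : m + 2 - 1 = m + 1 := by omega
    rw [h1, List.range_succ]
    rw [h2] at ih
    have e1 : (m + 4) % 2 = (m + 2) % 2 := by omega
    have e2 : (m + 3) % 2 = (m + 1) % 2 := by omega
    have r2 : (fibWord (m+2)).dropLast ++ [(m+2) % 2] = fibWord (m+2) := fib_concat (m+1)
    have r3 : (fibWord (m+3)).dropLast ++ [(m+1) % 2] = fibWord (m+3) := by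
      rw [← e2]; exact fib_concat (m+2)
    have rhs : fibWord (m+6) ++ fibWord (m+4)
        = (fibWord (m+5) ++ fibWord (m+3)) ++ ((fibWord (m+2)) ++ (fibWord (m+3) ++ fibWord (m+2))) := by
      show fibWord (m+5) ++ fibWord (m+4) ++ fibWord (m+4) = _
      show fibWord (m+5) ++ (fibWord (m+3) ++ fibWord (m+2)) ++ (fibWord (m+3) ++ fibWord (m+2)) = _
      simp [List.append_assoc]
    rw [rhs, ← ih, ← r2, ← r3]
    simp [sing_cons, e1, e2, List.append_assoc]
    omega

theorem stmt9 (N : ℕ) (hN : 2 ≤ N) :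
    IsFibPrefix ([0, 1, 0] ++
      ((List.range (N - 1)).map
        (fun i => singWord (i + 1) ++ singWord (i + 2) ++ singWord (i + 1))).flatten) := by
  obtain ⟨m, rfl⟩ : ∃ m, N = m + 2 := ⟨N - 2, by omega⟩
  refine ⟨m + 6, by omega, ?_⟩
  have h := key (m + 2) (by omega)
  have hfib : fibWord (m + 6) =
      (fibWord (m + 2 + 3) ++ fibWord (m + 2 + 1)) ++ fibWord (m + 2) := by
    show fibWord (m + 5) ++ fibWord (m + 4) = _
    show fibWord (m + 5) ++ (fibWord (m + 3) ++ fibWord (m + 2)) = _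
    simp [List.append_assoc]
  rw [hfib, ← h]
  exact (List.prefix_append _ _).trans (List.prefix_append _ _)
end

section
/- For every N ≥ 1, the word 0100·∏_{n=1}^{N}(rev(c_{2n+1})·rev(c_{2n+2})·rev(c_{2n+2})) is a prefix of the Fibonacci infinite word f. In other words, f = 0100·∏_{n≥1} rev(c_{2n+1}) rev(c_{2n+2})². -/
/-- The central word p n: the Fibonacci word f n with its last two letters removed. -/
def centralWord (n : ℕ) : List ℕ := (fibWord n).dropLast.dropLast

/-- The lower Christoffel word c n = 0 · p n · 1, for n ≥ 3. -/
def chrisWord (n : ℕ) : List ℕ := [0] ++ centralWord n ++ [1]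

/-!
Write `f n = p n ++ ε n` with `ε n = 01` or `10` according to the parity of `n`. Since
`f (n+5) = f (n+4) ++ f (n+3)`, the central words satisfy `p (n+5) = p (n+4) ε (n+4) p (n+3)`,
and by induction also `p (n+5) = p (n+3) ε (n+3) p (n+4)`; comparing the two factorizations shows
that every central word is a palindrome, so `rev (c n) = 1 · p n · 0`. Unfolding
`p (n+7)` three times gives `p (n+7) = p (n+5) ε p (n+3) ε p (n+4) ε p (n+4)` for even `n`
(where `ε = 01`), i.e. appending `rev (c (n+3)) rev (c (n+4))²` to `p (n+5) · 0` yields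
`p (n+7) · 0`. Hence the word of the theorem is `p (2N+5) · 0`, a prefix of `f (2N+5)`.
-/

open List

/-- `fibSuffix n` is the two-letter suffix of `fibWord (n + 3)`. -/
def fibSuffix : ℕ → List ℕ
  | 0 => [0, 1]
  | 1 => [1, 0]
  | n + 2 => fibSuffix n

lemma fibSuffix_two_mul (k : ℕ) : fibSuffix (2 * k) = [0, 1] := by
  induction k with
  | zero => rfl
  | succ k ih => exact ih

lemma reverse_fibSuffix_succ : ∀ n, (fibSuffix (n + 1)).reverse = fibSuffix n
  | 0 | 1 => rfl
  | n + 2 => reverse_fibSuffix_succ n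

lemma fibWord_add_three (n : ℕ) : fibWord (n + 3) = fibWord (n + 2) ++ fibWord (n + 1) := rfl

lemma dropLast_dropLast_append_fibSuffix (x : List ℕ) :
    ∀ n, (x ++ fibSuffix n).dropLast.dropLast = x
  | 0 | 1 => by simp [fibSuffix, dropLast_append_of_ne_nil]
  | n + 2 => dropLast_dropLast_append_fibSuffix x n

lemma fibWord_eq_centralWord_append_fibSuffix :
    ∀ n, fibWord (n + 3) = centralWord (n + 3) ++ fibSuffix n
  | 0 | 1 => rfl
  | n + 2 => by
    rw [centralWord, fibWord_add_three (n + 2), fibWord_eq_centralWord_append_fibSuffix n,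
      fibSuffix, ← append_assoc, dropLast_dropLast_append_fibSuffix]

lemma centralWord_add_five (n : ℕ) : centralWord (n + 5) = fibWord (n + 4) ++ centralWord (n + 3) := by
  rw [centralWord, fibWord_add_three (n + 2), fibWord_eq_centralWord_append_fibSuffix n,
    ← append_assoc, dropLast_dropLast_append_fibSuffix]

lemma centralWord_add_five_eq_left (n : ℕ) :
    centralWord (n + 5) = centralWord (n + 4) ++ fibSuffix (n + 1) ++ centralWord (n + 3) := by
  rw [centralWord_add_five, fibWord_eq_centralWord_append_fibSuffix (n + 1)]

lemma centralWord_add_five_eq_right (n : ℕ) :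
    centralWord (n + 5) = centralWord (n + 3) ++ fibSuffix n ++ centralWord (n + 4) := by
  induction n with
  | zero => rfl
  | succ n ih =>
    rw [centralWord_add_five_eq_left (n + 1), fibSuffix, centralWord_add_five_eq_left n] at *
    simp only [append_assoc] at ih ⊢
    rw [← ih]

lemma reverse_centralWord (n : ℕ) : (centralWord n).reverse = centralWord n := by
  induction n using Nat.strong_induction_on with
  | _ n ih =>
    match n, ih with
    | 0, _ | 1, _ | 2, _ | 3, _ | 4, _ => rfl
    | n + 5, ih =>
      conv_lhs => rw [centralWord_add_five_eq_left]
      simp only [reverse_append, ih (n + 3) (by omega), ih (n + 4) (by omega),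
        reverse_fibSuffix_succ]
      rw [centralWord_add_five_eq_right, append_assoc]

lemma centralWord_add_seven (n : ℕ) :
    centralWord (n + 7) = centralWord (n + 5) ++ fibSuffix n ++ centralWord (n + 3) ++
      fibSuffix n ++ centralWord (n + 4) ++ fibSuffix n ++ centralWord (n + 4) := by
  have right : fibWord (n + 4) ++ centralWord (n + 3) =
      centralWord (n + 3) ++ fibSuffix n ++ centralWord (n + 4) := by
    rw [← centralWord_add_five, centralWord_add_five_eq_right]
  calc centralWord (n + 7)
      = fibWord (n + 5) ++ fibWord (n + 4) ++ centralWord (n + 5) := by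
        rw [centralWord_add_five (n + 2), fibWord_add_three (n + 3)]
    _ = fibWord (n + 5) ++ (fibWord (n + 4) ++ centralWord (n + 3)) ++
          fibSuffix n ++ centralWord (n + 4) := by
        rw [centralWord_add_five_eq_right]; simp only [append_assoc]
    _ = _ := by
        rw [right, fibWord_eq_centralWord_append_fibSuffix (n + 2), fibSuffix]
        simp only [append_assoc]

lemma reverse_chrisWord (n : ℕ) : (chrisWord n).reverse = [1] ++ centralWord n ++ [0] := by
  simp [chrisWord, reverse_centralWord]

lemma christoffel_product_eq_centralWord_append_zero (N : ℕ) :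
    [0, 1, 0, 0] ++
      ((List.range N).map
        (fun i => (chrisWord (2 * (i + 1) + 1)).reverse ++
          (chrisWord (2 * (i + 1) + 2)).reverse ++
          (chrisWord (2 * (i + 1) + 2)).reverse)).flatten
    = centralWord (2 * N + 5) ++ [0] := by
  induction N with
  | zero => rfl
  | succ N ih =>
    rw [range_succ, map_append, flatten_append, ← append_assoc, ih,
      show 2 * (N + 1) + 5 = 2 * N + 7 by omega, centralWord_add_seven, fibSuffix_two_mul]
    simp [reverse_chrisWord, show 2 * (N + 1) + 1 = 2 * N + 3 by omega,
      show 2 * (N + 1) + 2 = 2 * N + 4 by omega]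

theorem stmt15_general (N : ℕ) :
    IsFibPrefix ([0, 1, 0, 0] ++
      ((List.range N).map
        (fun i => (chrisWord (2 * (i + 1) + 1)).reverse ++
          (chrisWord (2 * (i + 1) + 2)).reverse ++
          (chrisWord (2 * (i + 1) + 2)).reverse)).flatten) := by
  refine ⟨2 * N + 5, by omega, ?_⟩
  rw [christoffel_product_eq_centralWord_append_zero, show 2 * N + 5 = 2 * (N + 1) + 3 by omega,
    fibWord_eq_centralWord_append_fibSuffix, fibSuffix_two_mul]
  exact ⟨[1], by simp⟩

theorem stmt15 (N : ℕ) (hN : 1 ≤ N) :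
    IsFibPrefix ([0, 1, 0, 0] ++
      ((List.range N).map
        (fun i => (chrisWord (2 * (i + 1) + 1)).reverse ++
          (chrisWord (2 * (i + 1) + 2)).reverse ++
          (chrisWord (2 * (i + 1) + 2)).reverse)).flatten) :=
  stmt15_general N
end
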